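/- Let S be a numerical semigroup and let x be an odd integer with 1 ≤ x ≤ 2t(S) + 1, where t(S) is the type of S. Then there exist infinitely many almost symmetric numerical semigroups T with t(T) = x such that S = {n ∈ ℕ : 2n ∈ T}, i.e. S is one half of T. -/

import Mathlib

open Set

/-- A numerical semigroup: an additive submonoid of ℕ (viewed inside ℤ)
with finite complement in ℕ. -/
def IsNumericalSemigroup (S : Set ℤ) : Prop :=
  0 ∈ S ∧ (∀ x ∈ S, ∀ y ∈ S, x + y ∈ S) ∧ (∀ x ∈ S, 0 ≤ x) ∧
    ({z : ℤ | 0 ≤ z} \ S).Finite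

/-- The Frobenius number of a set `X ⊆ ℤ`: the largest integer not in `X`. -/
noncomputable def frobNum (X : Set ℤ) : ℤ := sSup {z : ℤ | z ∉ X}

/-- The genus of a numerical semigroup: the number of gaps. -/
noncomputable def genus (S : Set ℤ) : ℕ := ({z : ℤ | 0 ≤ z} \ S).ncard

/-- `E` is an ideal of `S`: a nonempty subset of `S` closed under adding elements of `S`. -/
def IsIdealOf (S E : Set ℤ) : Prop :=
  E.Nonempty ∧ E ⊆ S ∧ ∀ e ∈ E, ∀ s ∈ S, e + s ∈ E

/-- `E` is a relative ideal of `S`. -/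
def IsRelIdealOf (S E : Set ℤ) : Prop :=
  E.Nonempty ∧ (∀ e ∈ E, ∀ s ∈ S, e + s ∈ E) ∧ ∃ s ∈ S, ∀ e ∈ E, s + e ∈ S

/-- The difference of two subsets of ℤ: `F − G = {z : z + G ⊆ F}`. -/
def setSub (F G : Set ℤ) : Set ℤ := {z : ℤ | ∀ g ∈ G, z + g ∈ F}

/-- The standard canonical ideal `K(S) = {x : f(S) − x ∉ S}`. -/
def stdCanonical (S : Set ℤ) : Set ℤ := {x : ℤ | frobNum S - x ∉ S}

/-- The maximal ideal `M(S) = S ∖ {0}`. -/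
def maxIdeal (S : Set ℤ) : Set ℤ := S \ {0}

/-- The type of a numerical semigroup: `t(S) = |(M−M) ∖ S|`. -/
noncomputable def typeNS (S : Set ℤ) : ℕ :=
  ((setSub (maxIdeal S) (maxIdeal S)) \ S).ncard

/-- The numerical duplication `S ⋈^b E = 2·S ∪ (2·E + b)`. -/
def dup (S E : Set ℤ) (b : ℤ) : Set ℤ :=
  (fun x => 2 * x) '' S ∪ (fun x => 2 * x + b) '' E

/-- The minimum of a (relative) ideal. -/
noncomputable def minE (E : Set ℤ) : ℤ := sInf E

/-- The genus of a relative ideal: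
`g(E) = |{x ∈ ℤ∖E : m(E) ≤ x ≤ f(E)}|`. -/
noncomputable def idealGenus (E : Set ℤ) : ℕ :=
  {x : ℤ | x ∉ E ∧ minE E ≤ x ∧ x ≤ frobNum E}.ncard

/-- The normalization `Ẽ = E + (f(S) − f(E))` of a (relative) ideal `E` of `S`. -/
def tilde (S E : Set ℤ) : Set ℤ := (fun e => e + (frobNum S - frobNum E)) '' E

/-- `S` is symmetric: `z ∈ S ↔ f(S) − z ∉ S`. -/
def IsSymmetric (S : Set ℤ) : Prop := ∀ z : ℤ, z ∈ S ↔ frobNum S - z ∉ S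

/-- `S` is almost symmetric: `K(S) + M(S) ⊆ M(S)`. -/
def IsAlmostSymmetric (S : Set ℤ) : Prop :=
  ∀ k ∈ stdCanonical S, ∀ m ∈ maxIdeal S, k + m ∈ maxIdeal S


/-! Choose a set `A` of `i` pseudo-Frobenius numbers of `S` that is an upper segment of them, so
that `D = S ∪ A` is closed under addition and `S ⊆ D ⊆ M(S) − M(S)`. Put
`E = {y : f(S) − y ∉ D}`. For every odd `b > |f(S)|` the duplication `T = S ⋈^b E` has half `S`,
Frobenius number `2 f(S) + b`, canonical ideal `K(T) = 2D ∪ (2K(S) + b) ⊆ M(T) − M(T)`, and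
pseudo-Frobenius numbers `2A ∪ (2(f(S) − ({0} ∪ A)) + b)`; so `T` is almost symmetric of type
`2i + 1`, and distinct `b` give distinct `T`. -/

def pseudoFrob (S : Set ℤ) : Set ℤ := setSub (maxIdeal S) (maxIdeal S) \ S

/-- With `D = S` this is `stdCanonical S`. -/
def relCanonical (S D : Set ℤ) : Set ℤ := {y : ℤ | frobNum S - y ∉ D}

lemma frobNum_eq_of_forall_lt_mem {X : Set ℤ} {a : ℤ} (ha : a ∉ X) (h : ∀ z, a < z → z ∈ X) :
    frobNum X = a :=
  IsGreatest.csSup_eq ⟨ha, fun z hz => not_lt.1 fun hlt => hz (h z hlt)⟩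

lemma add_mem_setSub {F : Set ℤ} {x y : ℤ} (hx : x ∈ setSub F F) (hy : y ∈ setSub F F) :
    x + y ∈ setSub F F := fun g hg => by
  rw [add_assoc]
  exact hx _ (hy g hg)

lemma exists_upper_subset_ncard_eq {α : Type*} [LinearOrder α] {P : Set α} (hP : P.Finite) :
    ∀ i ≤ P.ncard, ∃ A ⊆ P, A.ncard = i ∧ ∀ q ∈ P, ∀ a ∈ A, a ≤ q → q ∈ A := by
  intro i
  induction i with
  | zero => exact fun _ => ⟨∅, empty_subset _, ncard_empty α, by simp⟩
  | succ n ih =>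
    intro hn
    obtain ⟨A, hAP, hAcard, hAup⟩ := ih (by omega)
    have hne : (P \ A).Nonempty := by
      by_contra h
      rw [not_nonempty_iff_eq_empty, sdiff_eq_empty] at h
      rw [le_antisymm h hAP, hAcard] at hn
      omega
    obtain ⟨a, ⟨haP, haA⟩, hamax⟩ := exists_max_image _ id hP.sdiff hne
    refine ⟨insert a A, insert_subset haP hAP, ?_, ?_⟩
    · rw [ncard_insert_of_notMem haA (hP.subset hAP), hAcard]
    · rintro q hqP a' (rfl | ha'A) hle
      · by_cases hqA : q ∈ A
        · exact mem_insert_of_mem _ hqA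
        · have hqa : q = a' := le_antisymm (hamax q ⟨hqP, hqA⟩) hle
          exact hqa ▸ mem_insert _ _
      · exact mem_insert_of_mem _ (hAup q hqP a' ha'A hle)

namespace IsNumericalSemigroup

variable {S : Set ℤ} (hS : IsNumericalSemigroup S)
include hS

lemma zero_mem : 0 ∈ S := hS.1

lemma add_mem {x y : ℤ} (hx : x ∈ S) (hy : y ∈ S) : x + y ∈ S := hS.2.1 x hx y hy

lemma nonneg {x : ℤ} (hx : x ∈ S) : 0 ≤ x := hS.2.2.1 x hx

lemma bddAbove_compl : BddAbove {z : ℤ | z ∉ S} := by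
  obtain ⟨B, hB⟩ := hS.2.2.2.bddAbove
  refine ⟨max B 0, fun z hz => ?_⟩
  rcases le_or_gt 0 z with h | h
  · exact (hB ⟨h, hz⟩).trans (le_max_left _ _)
  · exact h.le.trans (le_max_right _ _)

lemma le_frobNum {z : ℤ} (hz : z ∉ S) : z ≤ frobNum S := le_csSup hS.bddAbove_compl hz

lemma mem_of_frobNum_lt {z : ℤ} (hz : frobNum S < z) : z ∈ S :=
  by_contra fun h => (hS.le_frobNum h).not_gt hz

lemma neg_one_le_frobNum : -1 ≤ frobNum S :=
  hS.le_frobNum fun h => by linarith [hS.nonneg h]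

lemma mem_maxIdeal_iff {m : ℤ} : m ∈ maxIdeal S ↔ m ∈ S ∧ 0 < m := by
  simp only [maxIdeal, mem_sdiff, mem_singleton_iff]
  exact and_congr_right fun h => by have := hS.nonneg h; omega

lemma subset_setSub_maxIdeal : S ⊆ setSub (maxIdeal S) (maxIdeal S) := by
  intro s hs m hm
  rw [hS.mem_maxIdeal_iff] at hm ⊢
  exact ⟨hS.add_mem hs hm.1, by linarith [hS.nonneg hs]⟩

lemma nonneg_of_mem_setSub {z : ℤ} (hz : z ∈ setSub (maxIdeal S) (maxIdeal S)) : 0 ≤ z := by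
  obtain ⟨e, he, hemin⟩ := Int.exists_least_of_bdd (P := (· ∈ maxIdeal S))
    ⟨0, fun m hm => (hS.mem_maxIdeal_iff.1 hm).2.le⟩
    ⟨frobNum S + 2, hS.mem_maxIdeal_iff.2
      ⟨hS.mem_of_frobNum_lt (by omega), by linarith [hS.neg_one_le_frobNum]⟩⟩
  linarith [hemin _ (hz e he)]

lemma pseudoFrob_finite : (pseudoFrob S).Finite :=
  hS.2.2.2.subset fun _ hz => ⟨hS.nonneg_of_mem_setSub hz.1, hz.2⟩

/-- A sum not in `S` is again pseudo-Frobenius and lies above its summand from `A`. -/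
lemma union_add_mem {A : Set ℤ} (hA : A ⊆ pseudoFrob S)
    (hup : ∀ q ∈ pseudoFrob S, ∀ a ∈ A, a ≤ q → q ∈ A) {d d' : ℤ}
    (hd : d ∈ S ∪ A) (hd' : d' ∈ S ∪ A) : d + d' ∈ S ∪ A := by
  have hsub : S ∪ A ⊆ setSub (maxIdeal S) (maxIdeal S) :=
    union_subset hS.subset_setSub_maxIdeal fun a ha => (hA ha).1
  by_cases hS' : d + d' ∈ S
  · exact Or.inl hS'
  have hPF : d + d' ∈ pseudoFrob S := ⟨add_mem_setSub (hsub hd) (hsub hd'), hS'⟩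
  right
  rcases hd with hd | hd
  · rcases hd' with hd' | hd'
    · exact absurd (hS.add_mem hd hd') hS'
    · exact hup _ hPF d' hd' (by linarith [hS.nonneg hd])
  · exact hup _ hPF d hd (by linarith [hS.nonneg_of_mem_setSub (hsub hd')])

end IsNumericalSemigroup

section Duplication

variable {S E : Set ℤ} {b : ℤ} (hb : Odd b)
include hb

lemma exists_eq_two_mul_or_two_mul_add (z : ℤ) : ∃ w, z = 2 * w ∨ z = 2 * w + b := by
  obtain ⟨c, rfl⟩ := hb
  rcases Int.even_or_odd' z with ⟨w, rfl | rfl⟩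
  · exact ⟨w, Or.inl rfl⟩
  · exact ⟨w - c, Or.inr (by ring)⟩

lemma two_mul_mem_dup {w : ℤ} : 2 * w ∈ dup S E b ↔ w ∈ S := by
  obtain ⟨c, rfl⟩ := hb
  simp only [dup, mem_union, mem_image]
  constructor
  · rintro (⟨s, hs, h⟩ | ⟨e, -, h⟩)
    · obtain rfl : s = w := by omega
      exact hs
    · omega
  · exact fun h => Or.inl ⟨w, h, rfl⟩

lemma two_mul_add_mem_dup {w : ℤ} : 2 * w + b ∈ dup S E b ↔ w ∈ E := by
  obtain ⟨c, rfl⟩ := hb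
  simp only [dup, mem_union, mem_image]
  constructor
  · rintro (⟨s, -, h⟩ | ⟨e, he, h⟩)
    · omega
    · obtain rfl : e = w := by omega
      exact he
  · exact fun h => Or.inr ⟨w, h, rfl⟩

lemma two_mul_mem_maxIdeal_dup {w : ℤ} : 2 * w ∈ maxIdeal (dup S E b) ↔ w ∈ maxIdeal S := by
  simp only [maxIdeal, mem_sdiff, mem_singleton_iff, two_mul_mem_dup hb]
  exact and_congr_right fun _ => by omega

lemma two_mul_add_mem_maxIdeal_dup {w : ℤ} : 2 * w + b ∈ maxIdeal (dup S E b) ↔ w ∈ E := by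
  have : 2 * w + b ≠ 0 := by obtain ⟨c, rfl⟩ := hb; omega
  simp only [maxIdeal, mem_sdiff, mem_singleton_iff, two_mul_add_mem_dup hb, this, not_false_eq_true,
    and_true]

lemma mem_setSub_maxIdeal_dup {z : ℤ} :
    z ∈ setSub (maxIdeal (dup S E b)) (maxIdeal (dup S E b)) ↔
      (∀ m ∈ maxIdeal S, z + 2 * m ∈ maxIdeal (dup S E b)) ∧
        ∀ e ∈ E, z + (2 * e + b) ∈ maxIdeal (dup S E b) := by
  refine ⟨fun h => ⟨fun m hm => h _ ((two_mul_mem_maxIdeal_dup hb).2 hm),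
    fun e he => h _ ((two_mul_add_mem_maxIdeal_dup hb).2 he)⟩, fun ⟨hm, he⟩ u hu => ?_⟩
  obtain ⟨w, rfl | rfl⟩ := exists_eq_two_mul_or_two_mul_add hb u
  · exact hm w ((two_mul_mem_maxIdeal_dup hb).1 hu)
  · exact he w ((two_mul_add_mem_maxIdeal_dup hb).1 hu)

lemma two_mul_mem_setSub_maxIdeal_dup {w : ℤ} :
    2 * w ∈ setSub (maxIdeal (dup S E b)) (maxIdeal (dup S E b)) ↔
      w ∈ setSub (maxIdeal S) (maxIdeal S) ∧ ∀ e ∈ E, w + e ∈ E := by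
  rw [mem_setSub_maxIdeal_dup hb]
  refine and_congr (forall₂_congr fun m _ => ?_) (forall₂_congr fun e _ => ?_)
  · rw [← mul_add, two_mul_mem_maxIdeal_dup hb]
  · rw [← add_assoc, ← mul_add, two_mul_add_mem_maxIdeal_dup hb]

lemma two_mul_add_mem_setSub_maxIdeal_dup {w : ℤ} :
    2 * w + b ∈ setSub (maxIdeal (dup S E b)) (maxIdeal (dup S E b)) ↔
      (∀ m ∈ maxIdeal S, w + m ∈ E) ∧ ∀ e ∈ E, w + e + b ∈ maxIdeal S := by
  rw [mem_setSub_maxIdeal_dup hb]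
  refine and_congr (forall₂_congr fun m _ => ?_) (forall₂_congr fun e _ => ?_)
  · rw [show 2 * w + b + 2 * m = 2 * (w + m) + b by ring, two_mul_add_mem_maxIdeal_dup hb]
  · rw [show 2 * w + b + (2 * e + b) = 2 * (w + e + b) by ring, two_mul_mem_maxIdeal_dup hb]

lemma half_dup (hS0 : ∀ s ∈ S, 0 ≤ s) : {n : ℤ | 0 ≤ n ∧ 2 * n ∈ dup S E b} = S := by
  ext n
  simp only [mem_ofPred_eq, two_mul_mem_dup hb]
  exact ⟨And.right, fun h => ⟨hS0 n h, h⟩⟩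

variable (hS : IsNumericalSemigroup S) (hfb : frobNum S < b)
  (hE0 : ∀ e ∈ E, 0 ≤ e) (hEf : ∀ z, frobNum S < z → z ∈ E)
include hS hfb hEf

lemma mem_dup_of_lt {z : ℤ} (hz : 2 * frobNum S + b < z) : z ∈ dup S E b := by
  obtain ⟨w, rfl | rfl⟩ := exists_eq_two_mul_or_two_mul_add hb z
  · have := hS.neg_one_le_frobNum
    exact (two_mul_mem_dup hb).2 (hS.mem_of_frobNum_lt (by omega))
  · exact (two_mul_add_mem_dup hb).2 (hEf w (by omega))

lemma frobNum_dup (hfE : frobNum S ∉ E) : frobNum (dup S E b) = 2 * frobNum S + b :=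
  frobNum_eq_of_forall_lt_mem (fun h => hfE ((two_mul_add_mem_dup hb).1 h))
    fun _ => mem_dup_of_lt hb hS hfb hEf

include hE0 in
lemma isNumericalSemigroup_dup (hES : ∀ e ∈ E, ∀ s ∈ S, e + s ∈ E) :
    IsNumericalSemigroup (dup S E b) := by
  have hb0 : 0 < b := by have := hS.neg_one_le_frobNum; obtain ⟨c, rfl⟩ := hb; omega
  refine ⟨?_, ?_, ?_, ?_⟩
  · simpa using (two_mul_mem_dup (E := E) hb).2 hS.zero_mem
  · rintro _ (⟨s, hs, rfl⟩ | ⟨e, he, rfl⟩) _ (⟨s', hs', rfl⟩ | ⟨e', he', rfl⟩) <;> dsimp only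
    · rw [← mul_add]
      exact (two_mul_mem_dup hb).2 (hS.add_mem hs hs')
    · rw [show 2 * s + (2 * e' + b) = 2 * (e' + s) + b by ring]
      exact (two_mul_add_mem_dup hb).2 (hES e' he' s hs)
    · rw [show 2 * e + b + 2 * s' = 2 * (e + s') + b by ring]
      exact (two_mul_add_mem_dup hb).2 (hES e he s' hs')
    · rw [show 2 * e + b + (2 * e' + b) = 2 * (e + e' + b) by ring]
      exact (two_mul_mem_dup hb).2 (hS.mem_of_frobNum_lt (by linarith [hE0 e he, hE0 e' he']))
  · rintro _ (⟨s, hs, rfl⟩ | ⟨e, he, rfl⟩)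
    · linarith [hS.nonneg hs]
    · linarith [hE0 e he]
  · refine (finite_Icc 0 (2 * frobNum S + b)).subset fun z ⟨hz0, hzT⟩ => ⟨hz0, ?_⟩
    exact not_lt.1 fun h => hzT (mem_dup_of_lt hb hS hfb hEf h)

end Duplication

namespace IsNumericalSemigroup

variable {S D : Set ℤ} (hS : IsNumericalSemigroup S) (hSD : S ⊆ D)
  (hDM : D ⊆ setSub (maxIdeal S) (maxIdeal S))

include hS hSD in
lemma nonneg_of_mem_relCanonical {y : ℤ} (hy : y ∈ relCanonical S D) : 0 ≤ y :=
  not_lt.1 fun h => hy (hSD (hS.mem_of_frobNum_lt (by omega)))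

include hS hDM in
lemma mem_relCanonical_of_lt {z : ℤ} (hz : frobNum S < z) : z ∈ relCanonical S D :=
  fun h => by linarith [hS.nonneg_of_mem_setSub (hDM h)]

include hDM in
lemma add_mem_relCanonical_of_sub_notMem {y m : ℤ} (hy : frobNum S - y ∉ S)
    (hm : m ∈ maxIdeal S) : y + m ∈ relCanonical S D := fun h => by
  rw [show frobNum S - y = frobNum S - (y + m) + m by ring] at hy
  exact hy (hDM h m hm).1

omit hS in
lemma mem_of_forall_add_mem_relCanonical (h0 : 0 ∈ D) {w : ℤ}
    (hw : ∀ e ∈ relCanonical S D, w + e ∈ relCanonical S D) : w ∈ D := by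
  by_contra hwD
  have := hw (frobNum S - w) (by rwa [relCanonical, mem_ofPred_eq, sub_sub_cancel])
  rw [add_sub_cancel] at this
  exact this (by rwa [sub_self])

omit hS in
lemma add_mem_relCanonical (hDD : ∀ d ∈ D, ∀ d' ∈ D, d + d' ∈ D) {d e : ℤ} (hd : d ∈ D)
    (he : e ∈ relCanonical S D) : d + e ∈ relCanonical S D := fun h => by
  apply he
  rw [show frobNum S - e = frobNum S - (d + e) + d by ring]
  exact hDD _ h _ hd

include hS hSD in
lemma add_add_mem_maxIdeal {y b e : ℤ} (hf : frobNum S < y + b) (h0 : 0 < y + b)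
    (he : e ∈ relCanonical S D) : y + e + b ∈ maxIdeal S := by
  have := hS.nonneg_of_mem_relCanonical hSD he
  exact hS.mem_maxIdeal_iff.2 ⟨hS.mem_of_frobNum_lt (by omega), by omega⟩

variable (hDD : ∀ d ∈ D, ∀ d' ∈ D, d + d' ∈ D) {b : ℤ} (hb : Odd b) (hfb : frobNum S < b)
include hS hSD hDM hDD hb hfb

lemma isNumericalSemigroup_dup_relCanonical :
    IsNumericalSemigroup (dup S (relCanonical S D) b) :=
  isNumericalSemigroup_dup hb hS hfb (fun _ => hS.nonneg_of_mem_relCanonical hSD)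
    (fun _ => hS.mem_relCanonical_of_lt hDM)
    fun e he s hs => by rw [add_comm]; exact add_mem_relCanonical hDD (hSD hs) he

omit hDD in
lemma frobNum_dup_relCanonical : frobNum (dup S (relCanonical S D) b) = 2 * frobNum S + b :=
  frobNum_dup hb hS hfb (fun _ => hS.mem_relCanonical_of_lt hDM)
    fun h => h (by rw [sub_self]; exact hSD hS.zero_mem)

lemma isAlmostSymmetric_dup_relCanonical : IsAlmostSymmetric (dup S (relCanonical S D) b) := by
  have hbpos : 0 < b := by have := hS.neg_one_le_frobNum; obtain ⟨c, rfl⟩ := hb; omega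
  intro k hk
  simp only [stdCanonical, mem_ofPred_eq, hS.frobNum_dup_relCanonical hSD hDM hb hfb] at hk
  suffices k ∈ setSub (maxIdeal (dup S (relCanonical S D) b))
    (maxIdeal (dup S (relCanonical S D) b)) from this
  obtain ⟨y, rfl | rfl⟩ := exists_eq_two_mul_or_two_mul_add hb k
  · -- `2y ∈ K(T)` means `y ∈ D`
    rw [show 2 * frobNum S + b - 2 * y = 2 * (frobNum S - y) + b by ring,
      two_mul_add_mem_dup hb, relCanonical, mem_ofPred_eq, sub_sub_cancel, not_not] at hk
    exact (two_mul_mem_setSub_maxIdeal_dup hb).2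
      ⟨hDM hk, fun e he => add_mem_relCanonical hDD hk he⟩
  · -- `2y + b ∈ K(T)` means `y ∈ K(S)`
    rw [show 2 * frobNum S + b - (2 * y + b) = 2 * (frobNum S - y) by ring,
      two_mul_mem_dup hb] at hk
    have hy0 : 0 ≤ y := hS.nonneg_of_mem_relCanonical le_rfl hk
    refine (two_mul_add_mem_setSub_maxIdeal_dup hb).2
      ⟨fun m hm => add_mem_relCanonical_of_sub_notMem hDM hk hm, fun e he => ?_⟩
    exact hS.add_add_mem_maxIdeal hSD (by omega) (by omega) he

variable (hb0 : 0 < frobNum S + b)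
include hb0

lemma pseudoFrob_dup_relCanonical :
    pseudoFrob (dup S (relCanonical S D) b) =
      (fun a => 2 * a) '' (D \ S) ∪ (fun a => 2 * (frobNum S - a) + b) '' insert 0 (D \ S) := by
  obtain ⟨c, rfl⟩ := id hb
  ext z
  obtain ⟨w, rfl | rfl⟩ := exists_eq_two_mul_or_two_mul_add hb z
  · have hodd : 2 * w ∉ (fun a => 2 * (frobNum S - a) + (2 * c + 1)) '' insert 0 (D \ S) := by
      rintro ⟨a, -, h⟩
      dsimp only at h
      omega
    rw [pseudoFrob, mem_sdiff, two_mul_mem_setSub_maxIdeal_dup hb, two_mul_mem_dup hb, mem_union,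
      (mul_right_injective₀ two_ne_zero).mem_set_image, or_iff_left hodd]
    constructor
    · rintro ⟨⟨-, hE⟩, hwS⟩
      exact ⟨mem_of_forall_add_mem_relCanonical (hSD hS.zero_mem) hE, hwS⟩
    · rintro ⟨hwD, hwS⟩
      exact ⟨⟨hDM hwD, fun e he => add_mem_relCanonical hDD hwD he⟩, hwS⟩
  · have heven : 2 * w + (2 * c + 1) ∉ (fun a => 2 * a) '' (D \ S) := by
      rintro ⟨a, -, h⟩
      dsimp only at h
      omega
    have himage : 2 * w + (2 * c + 1) ∈
        (fun a => 2 * (frobNum S - a) + (2 * c + 1)) '' insert 0 (D \ S) ↔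
          frobNum S - w ∈ insert 0 (D \ S) :=
      ⟨fun ⟨a, ha, h⟩ => by rwa [show frobNum S - w = a by dsimp only at h; omega],
        fun h => ⟨_, h, by ring⟩⟩
    rw [pseudoFrob, mem_sdiff, two_mul_add_mem_setSub_maxIdeal_dup hb, two_mul_add_mem_dup hb,
      mem_union, or_iff_right heven, himage, relCanonical, mem_ofPred_eq, not_not]
    constructor
    · rintro ⟨⟨hm, -⟩, hwD⟩
      by_cases hwS : frobNum S - w ∈ S
      · -- a nonzero `f(S) − w ∈ S` would put `w + (f(S) − w) = f(S)` into `E`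
        refine Or.inl (by_contra fun h0 => ?_)
        have := hm (frobNum S - w) ⟨hwS, h0⟩
        rw [add_sub_cancel] at this
        exact this (by rw [sub_self]; exact hSD hS.zero_mem)
      · exact Or.inr ⟨hwD, hwS⟩
    · intro h
      have hwb : frobNum S < w + (2 * c + 1) ∧ 0 < w + (2 * c + 1) := by
        rcases h with h | ⟨-, h⟩
        · have := hS.neg_one_le_frobNum
          omega
        · have := hS.le_frobNum h
          omega
      refine ⟨⟨fun m hm => ?_, fun e he => hS.add_add_mem_maxIdeal hSD hwb.1 hwb.2 he⟩, ?_⟩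
      · rcases h with h | ⟨-, h⟩
        · exact hS.mem_relCanonical_of_lt hDM (by linarith [(hS.mem_maxIdeal_iff.1 hm).2])
        · exact add_mem_relCanonical_of_sub_notMem hDM h hm
      · rcases h with h | ⟨h, -⟩
        · exact h ▸ hSD hS.zero_mem
        · exact h

lemma typeNS_dup_relCanonical :
    typeNS (dup S (relCanonical S D) b) = 2 * (D \ S).ncard + 1 := by
  obtain ⟨c, rfl⟩ := id hb
  have hfin : (D \ S).Finite := hS.pseudoFrob_finite.subset (sdiff_subset_sdiff_left hDM)
  have hdisj : Disjoint ((fun a => 2 * a) '' (D \ S))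
      ((fun a => 2 * (frobNum S - a) + (2 * c + 1)) '' insert 0 (D \ S)) := by
    rw [disjoint_left]
    rintro _ ⟨a, -, rfl⟩ ⟨a', -, h⟩
    dsimp only at h
    omega
  have hinj : Function.Injective fun a => 2 * (frobNum S - a) + (2 * c + 1) :=
    fun a a' h => by dsimp only at h; omega
  have hzero : (0 : ℤ) ∉ D \ S := fun h => h.2 hS.zero_mem
  rw [typeNS, ← pseudoFrob, hS.pseudoFrob_dup_relCanonical hSD hDM hDD hb hfb hb0,
    ncard_union_eq hdisj (hfin.image _) ((hfin.insert 0).image _),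
    ncard_image_of_injective _ (mul_right_injective₀ two_ne_zero),
    ncard_image_of_injective _ hinj,
    ncard_insert_of_notMem hzero hfin]
  ring

end IsNumericalSemigroup

theorem one_half_of_infinitely_many_almost_symmetric_general
    (S : Set ℤ) (hS : IsNumericalSemigroup S)
    (x : ℕ) (hx : Odd x) (hx2 : x ≤ 2 * typeNS S + 1) :
    {T : Set ℤ | IsNumericalSemigroup T ∧ IsAlmostSymmetric T ∧ typeNS T = x ∧
      S = {n : ℤ | 0 ≤ n ∧ 2 * n ∈ T}}.Infinite := by
  obtain ⟨i, rfl⟩ := hx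
  obtain ⟨A, hAP, hAcard, hup⟩ :=
    exists_upper_subset_ncard_eq hS.pseudoFrob_finite i (by rw [typeNS, ← pseudoFrob] at hx2; omega)
  have hSD : S ⊆ S ∪ A := subset_union_left
  have hDM : S ∪ A ⊆ setSub (maxIdeal S) (maxIdeal S) :=
    union_subset hS.subset_setSub_maxIdeal fun a ha => (hAP ha).1
  have hDD : ∀ d ∈ S ∪ A, ∀ d' ∈ S ∪ A, d + d' ∈ S ∪ A :=
    fun _ hd _ hd' => hS.union_add_mem hAP hup hd hd'
  have hDS : (S ∪ A) \ S = A := union_sdiff_cancel_left fun a ha => (hAP ha.2).2 ha.1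
  set b : ℕ → ℤ := fun n => 2 * ((n : ℤ) + (frobNum S).natAbs) + 3
  have hb (n : ℕ) : Odd (b n) := ⟨n + (frobNum S).natAbs + 1, by ring⟩
  have hfb (n : ℕ) : frobNum S < b n ∧ 0 < frobNum S + b n := by
    dsimp only [b]
    omega
  refine infinite_of_injective_forall_mem
    (f := fun n : ℕ => dup S (relCanonical S (S ∪ A)) (b n)) (fun n m h => ?_)
    fun n => ⟨hS.isNumericalSemigroup_dup_relCanonical hSD hDM hDD (hb n) (hfb n).1,
      hS.isAlmostSymmetric_dup_relCanonical hSD hDM hDD (hb n) (hfb n).1,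
      by rw [hS.typeNS_dup_relCanonical hSD hDM hDD (hb n) (hfb n).1 (hfb n).2, hDS, hAcard],
      (half_dup (hb n) fun _ => hS.nonneg).symm⟩
  have := congrArg frobNum h
  simp only [hS.frobNum_dup_relCanonical hSD hDM (hb _) (hfb _).1, b] at this
  omega

/-- Every numerical semigroup `S` is one half of infinitely many almost
symmetric numerical semigroups of any prescribed odd type `x ≤ 2t(S) + 1`. -/
theorem one_half_of_infinitely_many_almost_symmetric
    (S : Set ℤ) (hS : IsNumericalSemigroup S)
    (x : ℕ) (hx : Odd x) (hx1 : 1 ≤ x) (hx2 : x ≤ 2 * typeNS S + 1) :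
    {T : Set ℤ | IsNumericalSemigroup T ∧ IsAlmostSymmetric T ∧ typeNS T = x ∧
      S = {n : ℤ | 0 ≤ n ∧ 2 * n ∈ T}}.Infinite :=
  one_half_of_infinitely_many_almost_symmetric_general S hS x hx hx2
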